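/- Let Λ be a finite set with a function α : Λ → ℕ, let M be a finite set, and let d : Λ × M → ℕ. For m ∈ M set ᾰ(m) := min{α(λ) : d(λ,m) ≠ 0} (assuming for each m some λ has d(λ,m) ≠ 0). Suppose B ⊆ Λ together with a bijection β : M → B, and B' ⊆ Λ with bijection β' : M → B', both satisfy: (a) d(β(m), m) = 1 and α(β(m)) = ᾰ(m) for all m; (b) d(λ, m) ≠ 0 implies ᾰ(m) < α(λ) or λ = β(m). Then B = B' and β = β'. -/
import Mathlib


/-- Uniqueness of canonical basic sets: conditions (a) and (b) of the definition
uniquely determine the subset `B ⊆ Λ` and the bijection `β : M → B`. -/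
theorem stmt8 {Λ M : Type*} [Fintype Λ] [Fintype M]
    (α : Λ → ℕ) (d : Λ → M → ℕ)
    (abreve : M → ℕ)
    (habreve : ∀ m : M, IsLeast {a : ℕ | ∃ l : Λ, d l m ≠ 0 ∧ α l = a} (abreve m))
    (B B' : Set Λ) (β β' : M → Λ)
    (hβinj : Function.Injective β) (hβrange : Set.range β = B)
    (hβ'inj : Function.Injective β') (hβ'range : Set.range β' = B')
    (ha : ∀ m, d (β m) m = 1 ∧ α (β m) = abreve m)
    (hb : ∀ (l : Λ) (m : M), d l m ≠ 0 → abreve m < α l ∨ l = β m)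
    (ha' : ∀ m, d (β' m) m = 1 ∧ α (β' m) = abreve m)
    (hb' : ∀ (l : Λ) (m : M), d l m ≠ 0 → abreve m < α l ∨ l = β' m) :
    B = B' ∧ β = β' := by
  have hβeq : β = β' := by
    funext m
    rcases hb (β' m) m (by simpa [(ha' m).1]) with h | h
    · exact absurd ((ha' m).2 ▸ h) (lt_irrefl _)
    · exact h.symm
  exact ⟨by rw [← hβrange, ← hβ'range, hβeq], hβeq⟩
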